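/- For every n ≥ 1, the identity Z_{n−1} · Z_{n+1} = (Z_n − X)^2 holds in ℤ[X]. -/
import Mathlib


open Polynomial

/-- Lucas-type polynomials: `l 0 = 2`, `l 1 = X`, `l n = X * l (n-1) - l (n-2)`. -/
noncomputable def lucPoly : ℕ → ℤ[X]
  | 0 => 2
  | 1 => X
  | (n + 2) => X * lucPoly (n + 1) - lucPoly n

/-- Herbig's variant of the spread polynomials: `Z n = 2 - lₙ(2 - X)`. -/
noncomputable def Zpoly (n : ℕ) : ℤ[X] := 2 - (lucPoly n).comp (2 - X)

lemma luc_cassini : ∀ n : ℕ, lucPoly n * lucPoly (n + 2) = (lucPoly (n + 1)) ^ 2 + X ^ 2 - 4 := by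
  intro n
  induction n with
  | zero => simp only [lucPoly]; ring
  | succ m ih =>
      have h3 : lucPoly (m + 3) = X * lucPoly (m + 2) - lucPoly (m + 1) := rfl
      have h2 : lucPoly (m + 2) = X * lucPoly (m + 1) - lucPoly m := rfl
      calc lucPoly (m+1) * lucPoly (m+3)
          = X * (lucPoly (m+1) * lucPoly (m+2)) - lucPoly (m+1)^2 := by rw [h3]; ring
        _ = X * (lucPoly (m+1) * lucPoly (m+2)) - (lucPoly m * lucPoly (m+2) - X^2 + 4) := by
            rw [ih]; ring
        _ = (X * lucPoly (m+1) - lucPoly m) * lucPoly (m+2) + X^2 - 4 := by ring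
        _ = lucPoly (m+2)^2 + X^2 - 4 := by rw [← h2]; ring

lemma luc_key (n : ℕ) :
    (2 - lucPoly n) * (2 - lucPoly (n + 2)) = (X - lucPoly (n + 1)) ^ 2 := by
  have h2 : lucPoly (n + 2) = X * lucPoly (n + 1) - lucPoly n := rfl
  have hc := luc_cassini n
  linear_combination hc - 2 * h2

theorem Zpoly_cassini (n : ℕ) (hn : 1 ≤ n) :
    Zpoly (n - 1) * Zpoly (n + 1) = (Zpoly n - X) ^ 2 := by
  obtain ⟨m, rfl⟩ := Nat.exists_eq_add_of_le hn
  rw [add_comm 1 m, Nat.add_sub_cancel]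
  simp only [Zpoly]
  have h := congrArg (fun p : ℤ[X] => p.comp (2 - X)) (luc_key m)
  simp only [mul_comp, sub_comp, pow_comp, X_comp, ofNat_comp, Nat.cast_ofNat] at h
  have h2 : ((2 : ℤ[X])).comp (2 - X) = 2 := by simp
  rw [show m + 1 + 1 = m + 2 from rfl]
  linear_combination h
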